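/- arXiv:2409.04476 — 2 statements merged into one kernel-verified Lean document; each statement's English description precedes it below -/
import Mathlib

section
/- Let G_1 = (V_1, E_1), G_2 = (V_2, E_2) be finite graphs and let α, β, γ > 0 with α > γ and β > γ. For binary variables x_{u,i}, p_u, s_i (u ∈ V_1, i ∈ V_2) define H_O = -Σ_{u∈V_1} p_u, H_A = Σ_{u∈V_1}(p_u - Σ_{i∈V_2} x_{u,i})² + Σ_{i∈V_2}(s_i - Σ_{u∈V_1} x_{u,i})², H_B = Σ_{{u,v}∈E_1} Σ_{{i,j}∉E_2} x_{u,i}x_{v,j} + Σ_{{u,v}∉E_1} Σ_{{i,j}∈E_2} x_{u,i}x_{v,j}, and Q = αH_A + βH_B + γH_O. If (x, p, s) minimizes Q over all binary assignments, then the relation φ = {(u,i) : x_{u,i} = 1} is an injective function from A_x = {u : ∃i, x_{u,i}=1} to V_2 satisfying: for all u, v ∈ A_x, {u,v} ∈ E_1 iff {φ(u), φ(v)} ∈ E_2. -/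
open Finset

/-- Real value of a binary (Boolean) variable. -/
def bval (v : Bool) : ℝ := if v then 1 else 0

variable {V₁ V₂ : Type*}

/-- `H_O = -Σ_{u∈V₁} p_u`. -/
def HO [Fintype V₁] (p : V₁ → Bool) : ℝ := -∑ u : V₁, bval (p u)

/-- `H_A = Σ_{u∈V₁}(p_u - Σ_{i∈V₂} x_{u,i})² + Σ_{i∈V₂}(s_i - Σ_{u∈V₁} x_{u,i})²`. -/
def HA [Fintype V₁] [Fintype V₂] (x : V₁ → V₂ → Bool) (p : V₁ → Bool) (s : V₂ → Bool) : ℝ :=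
    ∑ u : V₁, (bval (p u) - ∑ i : V₂, bval (x u i)) ^ 2 +
      ∑ i : V₂, (bval (s i) - ∑ u : V₁, bval (x u i)) ^ 2

/-- `H_B`, written as a sum over ordered pairs with a factor `1/2` to account
for the unordered pairs `{u,v} ∈ E₁`, `{i,j} ∉ E₂` (with `i ≠ j`) and
`{u,v} ∉ E₁` (with `u ≠ v`), `{i,j} ∈ E₂`. -/
noncomputable def HB [Fintype V₁] [Fintype V₂] (G₁ : SimpleGraph V₁) (G₂ : SimpleGraph V₂)
    [DecidableEq V₁] [DecidableEq V₂] [DecidableRel G₁.Adj] [DecidableRel G₂.Adj]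
    (x : V₁ → V₂ → Bool) : ℝ :=
    (1 / 2) * ∑ u : V₁, ∑ v : V₁, ∑ i : V₂, ∑ j : V₂,
      (((if G₁.Adj u v ∧ i ≠ j ∧ ¬ G₂.Adj i j then 1 else 0) : ℝ) +
        ((if u ≠ v ∧ ¬ G₁.Adj u v ∧ G₂.Adj i j then 1 else 0) : ℝ)) *
        bval (x u i) * bval (x v j)

/-- The QUBO for the maximum common induced subgraph problem. -/
noncomputable def QMCIS [Fintype V₁] [Fintype V₂] (G₁ : SimpleGraph V₁) (G₂ : SimpleGraph V₂)
    [DecidableEq V₁] [DecidableEq V₂] [DecidableRel G₁.Adj] [DecidableRel G₂.Adj]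
    (α β γ : ℝ) (x : V₁ → V₂ → Bool) (p : V₁ → Bool) (s : V₂ → Bool) : ℝ :=
    α * HA x p s + β * HB G₁ G₂ x + γ * HO p

/- ### Auxiliary material for the proof -/

lemma bval_nonneg (b : Bool) : 0 ≤ bval b := by cases b <;> simp [bval]
lemma bval_le_one (b : Bool) : bval b ≤ 1 := by cases b <;> simp [bval]
@[simp] lemma bval_true : bval true = 1 := rfl
@[simp] lemma bval_false : bval false = 0 := rfl

/-- Flip the entry `(v, j)` of `x` to `false`. -/
def flipx [DecidableEq V₁] [DecidableEq V₂] (x : V₁ → V₂ → Bool) (v : V₁) (j : V₂) :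
    V₁ → V₂ → Bool := fun a b => if a = v ∧ b = j then false else x a b

def nrow [Fintype V₂] (x : V₁ → V₂ → Bool) (u : V₁) : ℕ := ∑ i : V₂, if x u i then 1 else 0
def ncol [Fintype V₁] (x : V₁ → V₂ → Bool) (i : V₂) : ℕ := ∑ u : V₁, if x u i then 1 else 0

lemma sum_bval_row [Fintype V₂] (x : V₁ → V₂ → Bool) (u : V₁) :
    ∑ i : V₂, bval (x u i) = (nrow x u : ℝ) := by
  unfold nrow
  push_cast
  refine Finset.sum_congr rfl fun i _ => ?_
  cases x u i <;> simp [bval]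

lemma sum_bval_col [Fintype V₁] (x : V₁ → V₂ → Bool) (i : V₂) :
    ∑ u : V₁, bval (x u i) = (ncol x i : ℝ) := by
  unfold ncol
  push_cast
  refine Finset.sum_congr rfl fun u _ => ?_
  cases x u i <;> simp [bval]

lemma one_le_nrow [Fintype V₂] {x : V₁ → V₂ → Bool} {v : V₁} {j : V₂} (hx : x v j = true) :
    1 ≤ nrow x v := by
  unfold nrow
  have := Finset.single_le_sum (f := fun i : V₂ => if x v i then 1 else 0)
    (fun i _ => Nat.zero_le _) (Finset.mem_univ j)
  simpa [hx] using this

lemma one_le_ncol [Fintype V₁] {x : V₁ → V₂ → Bool} {v : V₁} {j : V₂} (hx : x v j = true) :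
    1 ≤ ncol x j := by
  unfold ncol
  have := Finset.single_le_sum (f := fun u : V₁ => if x u j then 1 else 0)
    (fun u _ => Nat.zero_le _) (Finset.mem_univ v)
  simpa [hx] using this

lemma two_le_nrow [Fintype V₂] [DecidableEq V₂] {x : V₁ → V₂ → Bool} {v : V₁} {i j : V₂}
    (hxi : x v i = true) (hxj : x v j = true) (hij : i ≠ j) : 2 ≤ nrow x v := by
  unfold nrow
  have hsub : ({i, j} : Finset V₂) ⊆ univ := Finset.subset_univ _
  have := Finset.sum_le_sum_of_subset (f := fun i : V₂ => if x v i then 1 else 0) hsub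
  rwa [Finset.sum_pair hij, hxi, hxj] at this

lemma two_le_ncol [Fintype V₁] [DecidableEq V₁] {x : V₁ → V₂ → Bool} {u v : V₁} {j : V₂}
    (hxu : x u j = true) (hxv : x v j = true) (huv : u ≠ v) : 2 ≤ ncol x j := by
  unfold ncol
  have hsub : ({u, v} : Finset V₁) ⊆ univ := Finset.subset_univ _
  have := Finset.sum_le_sum_of_subset (f := fun u : V₁ => if x u j then 1 else 0) hsub
  rwa [Finset.sum_pair huv, hxu, hxv] at this

lemma sum_shift {ι : Type*} [Fintype ι] [DecidableEq ι] (f g : ι → ℝ) (v : ι)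
    (h : ∀ u, u ≠ v → f u = g u) : ∑ u, f u = ∑ u, g u + (f v - g v) := by
  have h2 : ∑ u, (f u - g u) = f v - g v :=
    Finset.sum_eq_single_of_mem v (Finset.mem_univ v) (fun u _ hu => by rw [h u hu]; ring)
  rw [Finset.sum_sub_distrib] at h2
  linarith

lemma flip_row_ne [DecidableEq V₁] [DecidableEq V₂] (x : V₁ → V₂ → Bool) {u v : V₁} (j : V₂)
    (hu : u ≠ v) (i : V₂) : flipx x v j u i = x u i := by
  simp [flipx, hu]

lemma flip_col_ne [DecidableEq V₁] [DecidableEq V₂] (x : V₁ → V₂ → Bool) (v : V₁) {i j : V₂}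
    (hi : i ≠ j) (u : V₁) : flipx x v j u i = x u i := by
  simp [flipx, hi]

lemma flip_row_sum [Fintype V₂] [DecidableEq V₁] [DecidableEq V₂] {x : V₁ → V₂ → Bool}
    {v : V₁} {j : V₂} (hx : x v j = true) :
    ∑ i : V₂, bval (flipx x v j v i) = (nrow x v : ℝ) - 1 := by
  have key : ∀ i : V₂, bval (flipx x v j v i) = bval (x v i) - (if i = j then 1 else 0) := by
    intro i
    by_cases h : i = j
    · subst h; simp [flipx, hx]
    · simp [flipx, h]
  simp only [key]
  rw [Finset.sum_sub_distrib, sum_bval_row]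
  simp

lemma flip_col_sum [Fintype V₁] [DecidableEq V₁] [DecidableEq V₂] {x : V₁ → V₂ → Bool}
    {v : V₁} {j : V₂} (hx : x v j = true) :
    ∑ u : V₁, bval (flipx x v j u j) = (ncol x j : ℝ) - 1 := by
  have key : ∀ u : V₁, bval (flipx x v j u j) = bval (x u j) - (if u = v then 1 else 0) := by
    intro u
    by_cases h : u = v
    · subst h; simp [flipx, hx]
    · simp [flipx, h]
  simp only [key]
  rw [Finset.sum_sub_distrib, sum_bval_col]
  simp

lemma flip_HO [Fintype V₁] [DecidableEq V₁] (p : V₁ → Bool) (v : V₁) (b : Bool) :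
    HO (Function.update p v b) = HO p + (bval (p v) - bval b) := by
  unfold HO
  have h := sum_shift (fun u => bval (Function.update p v b u)) (fun u => bval (p u)) v
    (fun u hu => by simp only [Function.update_of_ne hu])
  simp only [Function.update_self] at h
  rw [h]
  ring

lemma flip_HA [Fintype V₁] [Fintype V₂] [DecidableEq V₁] [DecidableEq V₂]
    (x : V₁ → V₂ → Bool) (p : V₁ → Bool) (s : V₂ → Bool) {v : V₁} {j : V₂}
    (hx : x v j = true) (b c : Bool) :
    HA (flipx x v j) (Function.update p v b) (Function.update s j c) = HA x p s
      + ((bval b - ((nrow x v : ℝ) - 1)) ^ 2 - (bval (p v) - (nrow x v : ℝ)) ^ 2)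
      + ((bval c - ((ncol x j : ℝ) - 1)) ^ 2 - (bval (s j) - (ncol x j : ℝ)) ^ 2) := by
  unfold HA
  have h1 : ∑ u : V₁, (bval (Function.update p v b u) - ∑ i : V₂, bval (flipx x v j u i)) ^ 2
      = ∑ u : V₁, (bval (p u) - ∑ i : V₂, bval (x u i)) ^ 2
        + ((bval b - ((nrow x v : ℝ) - 1)) ^ 2 - (bval (p v) - (nrow x v : ℝ)) ^ 2) := by
    have := sum_shift
      (fun u => (bval (Function.update p v b u) - ∑ i : V₂, bval (flipx x v j u i)) ^ 2)
      (fun u => (bval (p u) - ∑ i : V₂, bval (x u i)) ^ 2) v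
      (fun u hu => by
        simp only [Function.update_of_ne hu]
        congr 2
        exact Finset.sum_congr rfl fun i _ => by rw [flip_row_ne x j hu i])
    simp only [Function.update_self] at this
    rw [this, flip_row_sum hx, sum_bval_row]
  have h2 : ∑ i : V₂, (bval (Function.update s j c i) - ∑ u : V₁, bval (flipx x v j u i)) ^ 2
      = ∑ i : V₂, (bval (s i) - ∑ u : V₁, bval (x u i)) ^ 2
        + ((bval c - ((ncol x j : ℝ) - 1)) ^ 2 - (bval (s j) - (ncol x j : ℝ)) ^ 2) := by
    have := sum_shift
      (fun i => (bval (Function.update s j c i) - ∑ u : V₁, bval (flipx x v j u i)) ^ 2)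
      (fun i => (bval (s i) - ∑ u : V₁, bval (x u i)) ^ 2) j
      (fun i hi => by
        simp only [Function.update_of_ne hi]
        congr 2
        exact Finset.sum_congr rfl fun u _ => by rw [flip_col_ne x v hi u])
    simp only [Function.update_self] at this
    rw [this, flip_col_sum hx, sum_bval_col]
  rw [h1, h2]
  ring

lemma bval_flip_le [DecidableEq V₁] [DecidableEq V₂] (x : V₁ → V₂ → Bool) (v : V₁) (j : V₂)
    (a : V₁) (b : V₂) : bval (flipx x v j a b) ≤ bval (x a b) := by
  unfold flipx
  by_cases h : a = v ∧ b = j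
  · simp [h, bval_nonneg]
  · simp [h]

@[simp] lemma flipx_self [DecidableEq V₁] [DecidableEq V₂] (x : V₁ → V₂ → Bool) (v : V₁)
    (j : V₂) : flipx x v j v j = false := by simp [flipx]

noncomputable def hterm [DecidableEq V₁] [DecidableEq V₂] (G₁ : SimpleGraph V₁)
    (G₂ : SimpleGraph V₂) [DecidableRel G₁.Adj] [DecidableRel G₂.Adj]
    (x : V₁ → V₂ → Bool) (t : V₁ × V₁ × V₂ × V₂) : ℝ :=
    (((if G₁.Adj t.1 t.2.1 ∧ t.2.2.1 ≠ t.2.2.2 ∧ ¬ G₂.Adj t.2.2.1 t.2.2.2 then 1 else 0) : ℝ) +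
      ((if t.1 ≠ t.2.1 ∧ ¬ G₁.Adj t.1 t.2.1 ∧ G₂.Adj t.2.2.1 t.2.2.2 then 1 else 0) : ℝ)) *
      bval (x t.1 t.2.2.1) * bval (x t.2.1 t.2.2.2)

lemma hterm_coeff_nonneg [DecidableEq V₁] [DecidableEq V₂] (G₁ : SimpleGraph V₁)
    (G₂ : SimpleGraph V₂) [DecidableRel G₁.Adj] [DecidableRel G₂.Adj] (t : V₁ × V₁ × V₂ × V₂) :
    (0:ℝ) ≤
      (((if G₁.Adj t.1 t.2.1 ∧ t.2.2.1 ≠ t.2.2.2 ∧ ¬ G₂.Adj t.2.2.1 t.2.2.2 then 1 else 0) : ℝ) +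
        ((if t.1 ≠ t.2.1 ∧ ¬ G₁.Adj t.1 t.2.1 ∧ G₂.Adj t.2.2.1 t.2.2.2 then 1 else 0) : ℝ)) := by
  positivity

lemma hterm_flip_le [DecidableEq V₁] [DecidableEq V₂]
    (G₁ : SimpleGraph V₁) (G₂ : SimpleGraph V₂)
    [DecidableRel G₁.Adj] [DecidableRel G₂.Adj]
    (x : V₁ → V₂ → Bool) (v : V₁) (j : V₂) (t : V₁ × V₁ × V₂ × V₂) :
    hterm G₁ G₂ (flipx x v j) t ≤ hterm G₁ G₂ x t := by
  unfold hterm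
  have hc := hterm_coeff_nonneg G₁ G₂ t
  gcongr
  all_goals first
    | exact bval_flip_le x v j _ _
    | exact bval_nonneg _
    | exact mul_nonneg hc (bval_nonneg _)

lemma HB_eq [Fintype V₁] [Fintype V₂] [DecidableEq V₁] [DecidableEq V₂]
    (G₁ : SimpleGraph V₁) (G₂ : SimpleGraph V₂)
    [DecidableRel G₁.Adj] [DecidableRel G₂.Adj] (x : V₁ → V₂ → Bool) :
    HB G₁ G₂ x = (1 / 2) * ∑ t : V₁ × V₁ × V₂ × V₂, hterm G₁ G₂ x t := by
  unfold HB hterm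
  rw [Fintype.sum_prod_type]
  congr 1
  refine Finset.sum_congr rfl fun a _ => ?_
  rw [Fintype.sum_prod_type]
  refine Finset.sum_congr rfl fun b _ => ?_
  rw [Fintype.sum_prod_type]

lemma HB_flip_le [Fintype V₁] [Fintype V₂] [DecidableEq V₁] [DecidableEq V₂]
    (G₁ : SimpleGraph V₁) (G₂ : SimpleGraph V₂)
    [DecidableRel G₁.Adj] [DecidableRel G₂.Adj] (x : V₁ → V₂ → Bool) (v : V₁) (j : V₂) :
    HB G₁ G₂ (flipx x v j) ≤ HB G₁ G₂ x := by
  rw [HB_eq, HB_eq]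
  have := Finset.sum_le_sum (s := (univ : Finset (V₁ × V₁ × V₂ × V₂)))
    (fun t _ => hterm_flip_le G₁ G₂ x v j t)
  linarith

lemma HB_flip_drop [Fintype V₁] [Fintype V₂] [DecidableEq V₁] [DecidableEq V₂]
    (G₁ : SimpleGraph V₁) (G₂ : SimpleGraph V₂)
    [DecidableRel G₁.Adj] [DecidableRel G₂.Adj] (x : V₁ → V₂ → Bool)
    {u v : V₁} {i j : V₂} (huv : u ≠ v) (hij : i ≠ j)
    (hxu : x u i = true) (hxv : x v j = true)
    (hmis : (G₁.Adj u v ∧ ¬ G₂.Adj i j) ∨ (¬ G₁.Adj u v ∧ G₂.Adj i j)) :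
    HB G₁ G₂ (flipx x v j) + 1 ≤ HB G₁ G₂ x := by
  rw [HB_eq, HB_eq]
  set x' := flipx x v j with hx'
  set t₁ : V₁ × V₁ × V₂ × V₂ := (u, v, i, j) with ht₁
  set t₂ : V₁ × V₁ × V₂ × V₂ := (v, u, j, i) with ht₂
  have htne : t₁ ≠ t₂ := fun h => huv (congrArg Prod.fst h)
  have h1 : hterm G₁ G₂ x t₁ - hterm G₁ G₂ x' t₁ = 1 := by
    have hz : hterm G₁ G₂ x' t₁ = 0 := by
      simp [hterm, ht₁, hx']
    rw [hz]
    rcases hmis with ⟨h₁, h₂⟩ | ⟨h₁, h₂⟩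
    · simp [hterm, ht₁, h₁, h₂, hij, hxu, hxv]
    · simp [hterm, ht₁, h₁, h₂, huv, hxu, hxv]
  have h2 : hterm G₁ G₂ x t₂ - hterm G₁ G₂ x' t₂ = 1 := by
    have hz : hterm G₁ G₂ x' t₂ = 0 := by
      simp [hterm, ht₂, hx']
    rw [hz]
    rcases hmis with ⟨h₁, h₂⟩ | ⟨h₁, h₂⟩
    · have a1 : G₁.Adj v u := h₁.symm
      have a2 : ¬ G₂.Adj j i := fun h => h₂ h.symm
      simp [hterm, ht₂, a1, a2, hij.symm, hxu, hxv]
    · have a1 : ¬ G₁.Adj v u := fun h => h₁ h.symm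
      have a2 : G₂.Adj j i := h₂.symm
      simp [hterm, ht₂, a1, a2, huv.symm, hxu, hxv]
  have hsub : ∑ t ∈ ({t₁, t₂} : Finset (V₁ × V₁ × V₂ × V₂)),
      (hterm G₁ G₂ x t - hterm G₁ G₂ x' t)
      ≤ ∑ t : V₁ × V₁ × V₂ × V₂, (hterm G₁ G₂ x t - hterm G₁ G₂ x' t) :=
    Finset.sum_le_sum_of_subset_of_nonneg (Finset.subset_univ _)
      (fun t _ _ => sub_nonneg.mpr (hterm_flip_le G₁ G₂ x v j t))
  rw [Finset.sum_pair htne, h1, h2, Finset.sum_sub_distrib] at hsub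
  linarith

lemma row_bound_weak {α γ : ℝ} (hα : 0 < α) (hγ : 0 < γ) (n : ℕ) (hn : 1 ≤ n) (pv : Bool) :
    α * ((bval (decide (2 ≤ n)) - ((n : ℝ) - 1)) ^ 2 - (bval pv - (n : ℝ)) ^ 2)
      + γ * (bval pv - bval (decide (2 ≤ n))) ≤ γ := by
  rcases Nat.lt_or_ge n 2 with h | h
  · have hn1 : n = 1 := by omega
    subst hn1
    norm_num
    cases pv <;> simp <;> nlinarith
  · rw [decide_eq_true (by exact_mod_cast h : 2 ≤ n)]
    have h2 : (2 : ℝ) ≤ (n : ℝ) := by exact_mod_cast h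
    cases pv <;> simp <;> nlinarith

lemma row_bound_strong {α γ : ℝ} (hα : 0 < α) (hγ : 0 < γ) (n : ℕ) (hn : 2 ≤ n) (pv : Bool) :
    α * ((bval (decide (2 ≤ n)) - ((n : ℝ) - 1)) ^ 2 - (bval pv - (n : ℝ)) ^ 2)
      + γ * (bval pv - bval (decide (2 ≤ n))) ≤ -α := by
  rw [decide_eq_true hn]
  have h2 : (2 : ℝ) ≤ (n : ℝ) := by exact_mod_cast hn
  cases pv <;> simp <;> nlinarith

lemma col_bound_weak (m : ℕ) (hm : 1 ≤ m) (sj : Bool) :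
    (bval (decide (2 ≤ m)) - ((m : ℝ) - 1)) ^ 2 - (bval sj - (m : ℝ)) ^ 2 ≤ 0 := by
  rcases Nat.lt_or_ge m 2 with h | h
  · have hm1 : m = 1 := by omega
    subst hm1
    norm_num
    cases sj <;> simp <;> nlinarith
  · rw [decide_eq_true h]
    have h2 : (2 : ℝ) ≤ (m : ℝ) := by exact_mod_cast h
    cases sj <;> simp <;> nlinarith

lemma col_bound_strong (m : ℕ) (hm : 2 ≤ m) (sj : Bool) :
    (bval (decide (2 ≤ m)) - ((m : ℝ) - 1)) ^ 2 - (bval sj - (m : ℝ)) ^ 2 ≤ -1 := by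
  rw [decide_eq_true hm]
  have h2 : (2 : ℝ) ≤ (m : ℝ) := by exact_mod_cast hm
  cases sj <;> simp <;> nlinarith

lemma flip_Q [Fintype V₁] [Fintype V₂] [DecidableEq V₁] [DecidableEq V₂]
    (G₁ : SimpleGraph V₁) (G₂ : SimpleGraph V₂)
    [DecidableRel G₁.Adj] [DecidableRel G₂.Adj]
    (α β γ : ℝ) (x : V₁ → V₂ → Bool) (p : V₁ → Bool) (s : V₂ → Bool)
    {v : V₁} {j : V₂} (hx : x v j = true) :
    QMCIS G₁ G₂ α β γ (flipx x v j)
        (Function.update p v (decide (2 ≤ nrow x v)))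
        (Function.update s j (decide (2 ≤ ncol x j)))
      = QMCIS G₁ G₂ α β γ x p s
        + (α * ((bval (decide (2 ≤ nrow x v)) - ((nrow x v : ℝ) - 1)) ^ 2
              - (bval (p v) - (nrow x v : ℝ)) ^ 2)
            + γ * (bval (p v) - bval (decide (2 ≤ nrow x v))))
        + α * ((bval (decide (2 ≤ ncol x j)) - ((ncol x j : ℝ) - 1)) ^ 2
              - (bval (s j) - (ncol x j : ℝ)) ^ 2)
        + β * (HB G₁ G₂ (flipx x v j) - HB G₁ G₂ x) := by
  unfold QMCIS
  rw [flip_HA x p s hx, flip_HO]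
  ring

theorem mcis_qubo_min_gives_injective_structure_preserving
    [Fintype V₁] [Fintype V₂] [DecidableEq V₁] [DecidableEq V₂]
    (G₁ : SimpleGraph V₁) (G₂ : SimpleGraph V₂)
    [DecidableRel G₁.Adj] [DecidableRel G₂.Adj]
    (α β γ : ℝ) (hα : 0 < α) (hβ : 0 < β) (hγ : 0 < γ) (hαγ : γ < α) (hβγ : γ < β)
    (x : V₁ → V₂ → Bool) (p : V₁ → Bool) (s : V₂ → Bool)
    (hmin : ∀ (x' : V₁ → V₂ → Bool) (p' : V₁ → Bool) (s' : V₂ → Bool),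
      QMCIS G₁ G₂ α β γ x p s ≤ QMCIS G₁ G₂ α β γ x' p' s') :
    (∀ u i j, x u i = true → x u j = true → i = j) ∧
    (∀ u v i, x u i = true → x v i = true → u = v) ∧
    (∀ u v i j, x u i = true → x v j = true → u ≠ v →
      (G₁.Adj u v ↔ G₂.Adj i j)) := by
  -- the acceptance of a flip would contradict minimality
  have base : ∀ (v : V₁) (j : V₂), x v j = true →
      0 ≤ (α * ((bval (decide (2 ≤ nrow x v)) - ((nrow x v : ℝ) - 1)) ^ 2
              - (bval (p v) - (nrow x v : ℝ)) ^ 2)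
            + γ * (bval (p v) - bval (decide (2 ≤ nrow x v))))
        + α * ((bval (decide (2 ≤ ncol x j)) - ((ncol x j : ℝ) - 1)) ^ 2
              - (bval (s j) - (ncol x j : ℝ)) ^ 2)
        + β * (HB G₁ G₂ (flipx x v j) - HB G₁ G₂ x) := by
    intro v j hx
    have h := hmin (flipx x v j)
      (Function.update p v (decide (2 ≤ nrow x v)))
      (Function.update s j (decide (2 ≤ ncol x j)))
    rw [flip_Q G₁ G₂ α β γ x p s hx] at h
    linarith
  have part1 : ∀ u i j, x u i = true → x u j = true → i = j := by
    intro u i j hxi hxj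
    by_contra hij
    have hb := base u j hxj
    have hr := row_bound_strong hα hγ (nrow x u) (two_le_nrow hxi hxj hij) (p u)
    have hcw := col_bound_weak (ncol x j) (one_le_ncol hxj) (s j)
    have hc : α * ((bval (decide (2 ≤ ncol x j)) - ((ncol x j : ℝ) - 1)) ^ 2
        - (bval (s j) - (ncol x j : ℝ)) ^ 2) ≤ 0 :=
      mul_nonpos_of_nonneg_of_nonpos hα.le hcw
    have hhb : β * (HB G₁ G₂ (flipx x u j) - HB G₁ G₂ x) ≤ 0 :=
      mul_nonpos_of_nonneg_of_nonpos hβ.le (by linarith [HB_flip_le G₁ G₂ x u j])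
    linarith
  have part2 : ∀ u v i, x u i = true → x v i = true → u = v := by
    intro u v i hxu hxv
    by_contra huv
    have hb := base v i hxv
    have hr := row_bound_weak hα hγ (nrow x v) (one_le_nrow hxv) (p v)
    have hcs := col_bound_strong (ncol x i) (two_le_ncol hxu hxv huv) (s i)
    have hc : α * ((bval (decide (2 ≤ ncol x i)) - ((ncol x i : ℝ) - 1)) ^ 2
        - (bval (s i) - (ncol x i : ℝ)) ^ 2) ≤ α * (-1) :=
      mul_le_mul_of_nonneg_left hcs hα.le
    have hhb : β * (HB G₁ G₂ (flipx x v i) - HB G₁ G₂ x) ≤ 0 :=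
      mul_nonpos_of_nonneg_of_nonpos hβ.le (by linarith [HB_flip_le G₁ G₂ x v i])
    linarith
  refine ⟨part1, part2, ?_⟩
  intro u v i j hxu hxv huv
  by_contra hiff
  have hij : i ≠ j := by
    intro h
    subst h
    exact huv (part2 u v i hxu hxv)
  have hmis : (G₁.Adj u v ∧ ¬ G₂.Adj i j) ∨ (¬ G₁.Adj u v ∧ G₂.Adj i j) := by
    by_cases h1 : G₁.Adj u v <;> by_cases h2 : G₂.Adj i j <;> tauto
  have hb := base v j hxv
  have hr := row_bound_weak hα hγ (nrow x v) (one_le_nrow hxv) (p v)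
  have hcw := col_bound_weak (ncol x j) (one_le_ncol hxv) (s j)
  have hc : α * ((bval (decide (2 ≤ ncol x j)) - ((ncol x j : ℝ) - 1)) ^ 2
      - (bval (s j) - (ncol x j : ℝ)) ^ 2) ≤ 0 :=
    mul_nonpos_of_nonneg_of_nonpos hα.le hcw
  have hdrop := HB_flip_drop G₁ G₂ x huv hij hxu hxv hmis
  have hhb : β * (HB G₁ G₂ (flipx x v j) - HB G₁ G₂ x) ≤ β * (-1) :=
    mul_le_mul_of_nonneg_left (by linarith) hβ.le
  linarith
end

section
/- Let x, p, s be any binary assignment for the maximum common induced subgraph QUBO with H_A(x,p,s) = 0. Then the relation φ = {(u,i) : x_{u,i} = 1} is an injective function from A_x = {u : p_u = 1} into V_2 with image B_x = {i : s_i = 1}. -/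
open Finset

variable {V₁ V₂ : Type*}

lemma bval_sum_card {α : Type*} [Fintype α] (f : α → Bool) :
    ∑ a : α, bval (f a) = ((univ.filter (fun a => f a = true)).card : ℝ) := by
  simp [bval, Finset.sum_boole]

lemma bval_eq_natcard (b : Bool) (n : ℕ) (h : bval b = (n : ℝ)) :
    (if b then 1 else 0) = n := by
  have := h
  cases b <;> simp [bval] at this ⊢ <;> exact_mod_cast this

theorem HA_zero_gives_injective_function
    [Fintype V₁] [Fintype V₂]
    (x : V₁ → V₂ → Bool) (p : V₁ → Bool) (s : V₂ → Bool)
    (h : HA x p s = 0) :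
    (∀ u i j, x u i = true → x u j = true → i = j) ∧
    (∀ u i, x u i = true → p u = true) ∧
    (∀ u, p u = true → ∃ i, x u i = true) ∧
    (∀ u v i, x u i = true → x v i = true → u = v) ∧
    (∀ i, s i = true ↔ ∃ u, x u i = true) := by
  unfold HA at h
  have h1 : ∑ u : V₁, (bval (p u) - ∑ i : V₂, bval (x u i)) ^ 2 = 0 ∧
      ∑ i : V₂, (bval (s i) - ∑ u : V₁, bval (x u i)) ^ 2 = 0 := by
    constructor <;>
    · have hA : (0:ℝ) ≤ ∑ u : V₁, (bval (p u) - ∑ i : V₂, bval (x u i)) ^ 2 :=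
        Finset.sum_nonneg fun _ _ => sq_nonneg _
      have hB : (0:ℝ) ≤ ∑ i : V₂, (bval (s i) - ∑ u : V₁, bval (x u i)) ^ 2 :=
        Finset.sum_nonneg fun _ _ => sq_nonneg _
      linarith [Finset.sum_nonneg (fun u (_ : u ∈ (univ : Finset V₁)) =>
        sq_nonneg (bval (p u) - ∑ i : V₂, bval (x u i)))]
  obtain ⟨hr, hc⟩ := h1
  have hrow : ∀ u, (if p u then 1 else 0) = (univ.filter (fun i => x u i = true)).card := by
    intro u
    have := (Finset.sum_eq_zero_iff_of_nonneg (fun u _ => sq_nonneg _)).mp hr u (mem_univ u)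
    have h2 : bval (p u) = ∑ i : V₂, bval (x u i) := by
      have := sq_eq_zero_iff.mp this; linarith
    rw [bval_sum_card] at h2
    exact bval_eq_natcard _ _ h2
  have hcol : ∀ i, (if s i then 1 else 0) = (univ.filter (fun u => x u i = true)).card := by
    intro i
    have := (Finset.sum_eq_zero_iff_of_nonneg (fun i _ => sq_nonneg _)).mp hc i (mem_univ i)
    have h2 : bval (s i) = ∑ u : V₁, bval (x u i) := by
      have := sq_eq_zero_iff.mp this; linarith
    rw [bval_sum_card] at h2
    exact bval_eq_natcard _ _ h2
  have card_le_row : ∀ u, (univ.filter (fun i => x u i = true)).card ≤ 1 := by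
    intro u; rw [← hrow u]; split <;> omega
  have card_le_col : ∀ i, (univ.filter (fun u => x u i = true)).card ≤ 1 := by
    intro i; rw [← hcol i]; split <;> omega
  refine ⟨?_, ?_, ?_, ?_, ?_⟩
  · intro u i j hi hj
    have hi' : i ∈ univ.filter (fun i => x u i = true) := by simp [hi]
    have hj' : j ∈ univ.filter (fun i => x u i = true) := by simp [hj]
    exact Finset.card_le_one.mp (card_le_row u) i hi' j hj'
  · intro u i hi
    have : 0 < (univ.filter (fun i => x u i = true)).card :=
      Finset.card_pos.mpr ⟨i, by simp [hi]⟩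
    have := hrow u
    by_contra hp
    simp [hp] at this
    omega
  · intro u hp
    have := hrow u
    rw [if_pos hp] at this
    obtain ⟨i, hi⟩ := Finset.card_pos.mp (this ▸ Nat.one_pos)
    exact ⟨i, by simpa using hi⟩
  · intro u v i hu hv
    have hu' : u ∈ univ.filter (fun u => x u i = true) := by simp [hu]
    have hv' : v ∈ univ.filter (fun u => x u i = true) := by simp [hv]
    exact Finset.card_le_one.mp (card_le_col i) u hu' v hv'
  · intro i
    constructor
    · intro hs
      have := hcol i
      rw [if_pos hs] at this
      obtain ⟨u, hu⟩ := Finset.card_pos.mp (this ▸ Nat.one_pos)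
      exact ⟨u, by simpa using hu⟩
    · rintro ⟨u, hu⟩
      have : 0 < (univ.filter (fun u => x u i = true)).card :=
        Finset.card_pos.mpr ⟨u, by simp [hu]⟩
      have := hcol i
      by_contra hs
      simp [hs] at this
      omega
end
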